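/- Let P be a symmetric positive definite n×n matrix (prior covariance), ŷ ∈ ℝ^d, C an n×d matrix (cross-covariance), Φ a symmetric d×d matrix (measurement covariance), R a symmetric positive definite d×d matrix (noise covariance), and y ∈ ℝ^d. Define S = Φ + R, K = C S⁻¹, μ⁺ = μ⁻ + K(y − ŷ), P⁺ = P − K S Kᵀ (assuming S invertible). For any invertible d×d matrix D, replacing ŷ, C, Φ, R, y by Dŷ, CDᵀ, DΦDᵀ, DRDᵀ, Dy yields the same updated mean μ⁺ and covariance P⁺. -/
import Mathlib


open Matrix

/-- Invariance of the general Gaussian filter update under an invertible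
linear transformation `D` of the measurement. -/
theorem ggf_update_invariant_under_linear_transform
    {n d : ℕ}
    (P : Matrix (Fin n) (Fin n) ℝ) (hP : P.PosDef)
    (μ : Fin n → ℝ) (yhat y : Fin d → ℝ)
    (C : Matrix (Fin n) (Fin d) ℝ)
    (Φ : Matrix (Fin d) (Fin d) ℝ) (hΦ : Φ.IsSymm)
    (R : Matrix (Fin d) (Fin d) ℝ) (hR : R.PosDef)
    (D : Matrix (Fin d) (Fin d) ℝ) (hD : IsUnit D.det)
    (hS : IsUnit (Φ + R).det) :
    μ + (C * Dᵀ * (D * (Φ + R) * Dᵀ)⁻¹).mulVec (D.mulVec y - D.mulVec yhat)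
        = μ + (C * (Φ + R)⁻¹).mulVec (y - yhat) ∧
    P - (C * Dᵀ * (D * (Φ + R) * Dᵀ)⁻¹) * (D * (Φ + R) * Dᵀ) *
          (C * Dᵀ * (D * (Φ + R) * Dᵀ)⁻¹)ᵀ
        = P - (C * (Φ + R)⁻¹) * (Φ + R) * (C * (Φ + R)⁻¹)ᵀ := by
  set S := Φ + R with hSdef
  have hDT : IsUnit Dᵀ.det := by rwa [Matrix.det_transpose]
  have hinv : (D * S * Dᵀ)⁻¹ = Dᵀ⁻¹ * S⁻¹ * D⁻¹ := by
    rw [Matrix.mul_inv_rev, Matrix.mul_inv_rev, Matrix.mul_assoc]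
  have hkey : C * Dᵀ * (D * S * Dᵀ)⁻¹ = C * S⁻¹ * D⁻¹ := by
    rw [hinv, ← Matrix.mul_assoc, ← Matrix.mul_assoc, Matrix.mul_assoc C,
      Matrix.mul_nonsing_inv _ hDT, Matrix.mul_one]
  constructor
  · rw [hkey, ← Matrix.mulVec_sub]
    simp only [Matrix.mulVec_mulVec]
    rw [Matrix.mul_assoc, Matrix.nonsing_inv_mul _ hD, Matrix.mul_one]
  · rw [hkey]
    congr 1
    have h2 : (C * S⁻¹ * D⁻¹)ᵀ = Dᵀ⁻¹ * (C * S⁻¹)ᵀ := by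
      rw [Matrix.transpose_mul, Matrix.transpose_nonsing_inv]
    rw [h2]
    calc C * S⁻¹ * D⁻¹ * (D * S * Dᵀ) * (Dᵀ⁻¹ * (C * S⁻¹)ᵀ)
        = C * S⁻¹ * (D⁻¹ * (D * (S * (Dᵀ * (Dᵀ⁻¹ * (C * S⁻¹)ᵀ))))) := by
          simp only [Matrix.mul_assoc]
      _ = C * S⁻¹ * (S * (C * S⁻¹)ᵀ) := by
          rw [Matrix.nonsing_inv_mul_cancel_left _ _ hD,
            Matrix.mul_nonsing_inv_cancel_left _ _ hDT]
      _ = C * S⁻¹ * S * (C * S⁻¹)ᵀ := by simp only [Matrix.mul_assoc]
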